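/- arXiv:1911.03169 — 4 statements merged into one kernel-verified Lean document; each statement's English description precedes it below -/
import Mathlib

section
/- Let G = (V,E) be a finite simple graph without isolated vertices and define the independent set game Γ_G on player set E by γ(F) = α(G[V⟨F⟩]) for F ⊆ E. Then Γ_G is convex (i.e., γ(S) + γ(T) ≤ γ(S ∩ T) + γ(S ∪ T) for all S, T ⊆ E) if and only if every non-pendant edge of G is incident to a pendant edge of G. -/
/-- `closedVerts G F` is V⟨F⟩: the set of vertices of `G` all of whose incident
edges belong to `F`. -/
def closedVerts {V : Type*} (G : SimpleGraph V) (F : Set (Sym2 V)) : Set V :=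
  {v | ∀ e ∈ G.edgeSet, v ∈ e → e ∈ F}

/-- `s` is an independent set of the induced subgraph `G[A]`. -/
def IsIndepOn {V : Type*} (G : SimpleGraph V) (A : Set V) (s : Finset V) : Prop :=
  ↑s ⊆ A ∧ ∀ u ∈ s, ∀ v ∈ s, ¬ G.Adj u v

/-- `gamma G F = α(G[V⟨F⟩])`, the maximum size of an independent set of the
subgraph of `G` induced on `closedVerts G F`. -/
noncomputable def gamma {V : Type*} [Fintype V] (G : SimpleGraph V) (F : Set (Sym2 V)) : ℕ :=
  sSup {n | ∃ s : Finset V, IsIndepOn G (closedVerts G F) s ∧ s.card = n}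

/-!
If every non-pendant edge meets a pendant edge, some vertex cover `Q` has each of its vertices
adjacent to a pendant vertex outside `Q`. Sending each vertex of `Q` to that pendant neighbour turns
any independent set of `G[V⟨F⟩]` into a subset of `V⟨F⟩ \ Q` of the same size, and `V⟨F⟩ \ Q` is
itself independent, so `γ(F) = |V⟨F⟩ \ Q|`. As `V⟨S ∩ T⟩ = V⟨S⟩ ∩ V⟨T⟩` and `V⟨·⟩` is monotone,
this is supermodular.

Conversely, let `xy` be an edge with no pendant edge at either end, and let `δa` be the set of edges
at `a`. For `ab = xy`, or `ab = xw` when some `w` has neighbourhood exactly `{x, y}`, the set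
`V⟨δa ∪ δb⟩` is a clique, so `γ(δa) + γ(δb) ≥ 2 > 1 ≥ γ(δa ∩ δb) + γ(δa ∪ δb)`, because
`V⟨δa ∩ δb⟩` is empty.
-/

section closedVerts

variable {V : Type*} {G : SimpleGraph V}

lemma mem_closedVerts_iff_adj {F : Set (Sym2 V)} {v : V} :
    v ∈ closedVerts G F ↔ ∀ w, G.Adj v w → s(v, w) ∈ F := by
  refine ⟨fun hv w hw => hv _ hw (Sym2.mem_mk_left v w), fun hv e he hve => ?_⟩
  obtain ⟨w, rfl⟩ := Sym2.mem_iff_exists.mp hve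
  exact hv w he

lemma closedVerts_inter (S T : Set (Sym2 V)) :
    closedVerts G (S ∩ T) = closedVerts G S ∩ closedVerts G T := by
  ext v
  exact ⟨fun h => ⟨fun e he hv => (h e he hv).1, fun e he hv => (h e he hv).2⟩,
    fun h e he hv => ⟨h.1 e he hv, h.2 e he hv⟩⟩

lemma closedVerts_mono {S T : Set (Sym2 V)} (hST : S ⊆ T) :
    closedVerts G S ⊆ closedVerts G T :=
  fun _ hv e he hve => hST (hv e he hve)

lemma mem_closedVerts_incidenceSet (v : V) : v ∈ closedVerts G (G.incidenceSet v) :=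
  fun _ he hve => ⟨he, hve⟩

end closedVerts

section gamma

variable {V : Type*} [Fintype V] {G : SimpleGraph V} {F : Set (Sym2 V)}

lemma le_gamma {s : Finset V} (hs : IsIndepOn G (closedVerts G F) s) : s.card ≤ gamma G F :=
  le_csSup ⟨Fintype.card V, by rintro n ⟨t, -, rfl⟩; exact t.card_le_univ⟩ ⟨s, hs, rfl⟩

lemma gamma_le {n : ℕ} (h : ∀ s : Finset V, IsIndepOn G (closedVerts G F) s → s.card ≤ n) :
    gamma G F ≤ n :=
  csSup_le ⟨0, ∅, ⟨by simp, by simp⟩, rfl⟩ (by rintro m ⟨s, hs, rfl⟩; exact h s hs)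

lemma one_le_gamma_of_mem {v : V} (hv : v ∈ closedVerts G F) : 1 ≤ gamma G F :=
  le_gamma (s := {v}) ⟨by simpa using hv, by simp⟩

lemma gamma_le_ncard : gamma G F ≤ (closedVerts G F).ncard :=
  gamma_le fun s hs => by
    rw [← Set.ncard_coe_finset]
    exact Set.ncard_le_ncard hs.1

lemma gamma_le_one_of_isClique (h : G.IsClique (closedVerts G F)) : gamma G F ≤ 1 :=
  gamma_le fun s hs => Finset.card_le_one.mpr fun u hu v hv => by
    by_contra huv
    exact hs.2 u hu v hv (h (hs.1 hu) (hs.1 hv) huv)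

end gamma

section pendantCover

variable {V : Type*} [Fintype V] {G : SimpleGraph V} [DecidableRel G.Adj]

lemma eq_of_adj_of_degree_eq_one {u v w : V} (hu : G.degree u = 1) (hv : G.Adj u v)
    (hw : G.Adj u w) : v = w :=
  (SimpleGraph.degree_eq_one_iff_existsUnique_adj.mp hu).unique hv hw

structure IsPendantCover (G : SimpleGraph V) [DecidableRel G.Adj] (Q : Set V) : Prop where
  isVertexCover : G.IsVertexCover Q
  exists_pendant : ∀ v ∈ Q, ∃ u ∉ Q, G.Adj v u ∧ G.degree u = 1

lemma IsPendantCover.gamma_eq {Q : Set V} (hQ : IsPendantCover G Q) (F : Set (Sym2 V)) :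
    gamma G F = (closedVerts G F \ Q).ncard := by
  classical
  refine le_antisymm (gamma_le fun s hs => ?_) ?_
  · choose! p hpQ hpadj hpdeg using hQ.exists_pendant
    have hp_closed : ∀ v ∈ Q, v ∈ closedVerts G F → p v ∈ closedVerts G F := by
      refine fun v hvQ hv => mem_closedVerts_iff_adj.mpr fun w hw => ?_
      obtain rfl := eq_of_adj_of_degree_eq_one (hpdeg v hvQ) hw (hpadj v hvQ).symm
      rw [Sym2.eq_swap]
      exact mem_closedVerts_iff_adj.mp hv _ (hpadj w hvQ)
    let f : V → V := fun v => if v ∈ Q then p v else v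
    rw [Set.ncard_eq_toFinset_card']
    refine Finset.card_le_card_of_injOn f (fun v hv => ?_) (fun v hv w hw hvw => ?_)
    · have hv' := hs.1 hv
      by_cases hvQ : v ∈ Q <;> simp [f, hvQ, hpQ, hp_closed, hv']
    · have hnadj := hs.2 v hv w hw
      by_cases hvQ : v ∈ Q <;> by_cases hwQ : w ∈ Q <;> simp only [f, hvQ, hwQ, if_true,
        if_false] at hvw
      · exact eq_of_adj_of_degree_eq_one (hpdeg w hwQ) (hvw ▸ hpadj v hvQ).symm (hpadj w hwQ).symm
      · exact absurd (hvw ▸ hpadj v hvQ) hnadj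
      · exact absurd (hvw ▸ hpadj w hwQ).symm hnadj
      · exact hvw
  · have hindep : IsIndepOn G (closedVerts G F) (closedVerts G F \ Q).toFinset := by
      refine ⟨by simp, fun u hu v hv huv => ?_⟩
      simp only [Set.mem_toFinset, Set.mem_sdiff] at hu hv
      exact (hQ.isVertexCover huv).elim hu.2 hv.2
    simpa [Set.ncard_eq_toFinset_card'] using le_gamma hindep

lemma IsPendantCover.gamma_add_gamma_le {Q : Set V} (hQ : IsPendantCover G Q)
    (S T : Set (Sym2 V)) : gamma G S + gamma G T ≤ gamma G (S ∩ T) + gamma G (S ∪ T) := by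
  rw [hQ.gamma_eq, hQ.gamma_eq, hQ.gamma_eq, hQ.gamma_eq, closedVerts_inter,
    Set.sdiff_inter_distrib_right, ← Set.ncard_union_add_ncard_inter, add_comm]
  gcongr
  · exact Set.toFinite _
  · rw [← Set.union_sdiff_distrib]
    exact Set.sdiff_subset_sdiff_left (Set.union_subset (closedVerts_mono Set.subset_union_left)
      (closedVerts_mono Set.subset_union_right))

/-- On a component consisting of a single edge both ends are pendant; the order picks one. -/
lemma isPendantCover_of_linearOrder [LinearOrder V]
    (hcond : ∀ e ∈ G.edgeSet, (¬ ∃ v ∈ e, G.degree v = 1) →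
      ∃ f ∈ G.edgeSet, (∃ v ∈ f, G.degree v = 1) ∧ ∃ u : V, u ∈ e ∧ u ∈ f) :
    IsPendantCover G {v | ∃ u, G.Adj v u ∧ G.degree u = 1 ∧ (G.degree v = 1 → u < v)} := by
  set Q := {v | ∃ u, G.Adj v u ∧ G.degree u = 1 ∧ (G.degree v = 1 → u < v)}
  have cover_of_pendant : ∀ a b, G.Adj a b → G.degree b = 1 → a ∈ Q ∨ b ∈ Q := by
    intro a b hab hb
    by_cases ha : G.degree a = 1
    · rcases lt_or_gt_of_ne hab.ne with h | h
      · exact Or.inr ⟨a, hab.symm, ha, fun _ => h⟩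
      · exact Or.inl ⟨b, hab, hb, fun _ => h⟩
    · exact Or.inl ⟨b, hab, hb, fun h => absurd h ha⟩
  refine ⟨fun a b hab => ?_, ?_⟩
  · by_cases hb : G.degree b = 1
    · exact cover_of_pendant a b hab hb
    by_cases ha : G.degree a = 1
    · exact (cover_of_pendant b a hab.symm ha).symm
    have hnp : ¬ ∃ v ∈ s(a, b), G.degree v = 1 := by
      rintro ⟨v, hv, hv1⟩
      rcases Sym2.mem_iff.mp hv with rfl | rfl <;> contradiction
    obtain ⟨f, hf, ⟨p, hpf, hp⟩, u, hue, huf⟩ := hcond s(a, b) hab hnp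
    obtain ⟨w, rfl⟩ := Sym2.mem_iff_exists.mp huf
    have hu : G.degree u ≠ 1 := by rcases Sym2.mem_iff.mp hue with rfl | rfl <;> assumption
    obtain rfl : p = w := by
      rcases Sym2.mem_iff.mp hpf with rfl | rfl
      · exact absurd hp hu
      · rfl
    have huQ : u ∈ Q := ⟨p, hf, hp, fun h => absurd h hu⟩
    rcases Sym2.mem_iff.mp hue with rfl | rfl
    · exact Or.inl huQ
    · exact Or.inr huQ
  · rintro v ⟨u, hvu, hu, hlt⟩
    refine ⟨u, ?_, hvu, hu⟩
    rintro ⟨w, huw, hw, hlt'⟩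
    obtain rfl := eq_of_adj_of_degree_eq_one hu huw hvu.symm
    exact lt_asymm (hlt hw) (hlt' hu)

end pendantCover

section necessity

variable {V : Type*} [Fintype V] {G : SimpleGraph V} [DecidableRel G.Adj]

lemma two_le_degree_of_adj {v w : V} (h : G.Adj v w) (hv : G.degree v ≠ 1) : 2 ≤ G.degree v := by
  have := (G.degree_pos_iff_exists_adj v).mpr ⟨w, h⟩
  omega

lemma closedVerts_incidenceSet_inter_eq_empty (hiso : ∀ v : V, ∃ u, G.Adj v u) {a b : V}
    (hab : a ≠ b) (ha : 2 ≤ G.degree a) (hb : 2 ≤ G.degree b) :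
    closedVerts G (G.incidenceSet a ∩ G.incidenceSet b) = ∅ := by
  refine Set.eq_empty_of_forall_notMem fun v hv => ?_
  have hedge : ∀ z, G.Adj v z → s(v, z) = s(a, b) := fun z hz =>
    have hvz := mem_closedVerts_iff_adj.mp hv z hz
    (Sym2.mem_and_mem_iff hab).mp ⟨hvz.1.2, hvz.2.2⟩
  obtain ⟨z, hz⟩ := hiso v
  have hv2 : 2 ≤ G.degree v := by
    have hv : v ∈ s(a, b) := hedge z hz ▸ Sym2.mem_mk_left v z
    rcases Sym2.mem_iff.mp hv with rfl | rfl <;> assumption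
  obtain ⟨z₁, hz₁, z₂, hz₂, hne⟩ := Finset.one_lt_card.mp hv2
  rw [SimpleGraph.mem_neighborFinset] at hz₁ hz₂
  exact hne (Sym2.congr_right.mp ((hedge z₁ hz₁).trans (hedge z₂ hz₂).symm))

lemma gamma_inter_add_gamma_union_lt (hiso : ∀ v : V, ∃ u, G.Adj v u) {a b : V} (hab : G.Adj a b)
    (ha : 2 ≤ G.degree a) (hb : 2 ≤ G.degree b)
    (hclique : G.IsClique (closedVerts G (G.incidenceSet a ∪ G.incidenceSet b))) :
    gamma G (G.incidenceSet a ∩ G.incidenceSet b) + gamma G (G.incidenceSet a ∪ G.incidenceSet b)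
      < gamma G (G.incidenceSet a) + gamma G (G.incidenceSet b) := by
  have hinter : gamma G (G.incidenceSet a ∩ G.incidenceSet b) = 0 := by
    have := gamma_le_ncard (G := G) (F := G.incidenceSet a ∩ G.incidenceSet b)
    rwa [closedVerts_incidenceSet_inter_eq_empty hiso hab.ne ha hb, Set.ncard_empty,
      Nat.le_zero] at this
  have hunion := gamma_le_one_of_isClique hclique
  have ha₁ := one_le_gamma_of_mem (mem_closedVerts_incidenceSet (G := G) a)
  have hb₁ := one_le_gamma_of_mem (mem_closedVerts_incidenceSet (G := G) b)
  omega

lemma neighborFinset_eq_of_mem_closedVerts [DecidableEq V] (hiso : ∀ v : V, ∃ u, G.Adj v u) {a b t : V}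
    (hNa : ∀ z, G.Adj a z → 2 ≤ G.degree z) (hNb : ∀ z, G.Adj b z → 2 ≤ G.degree z)
    (ht : t ∈ closedVerts G (G.incidenceSet a ∪ G.incidenceSet b)) (hta : t ≠ a) (htb : t ≠ b) :
    G.neighborFinset t = {a, b} := by
  have hsub : G.neighborFinset t ⊆ {a, b} := by
    intro z hz
    rw [SimpleGraph.mem_neighborFinset] at hz
    rcases mem_closedVerts_iff_adj.mp ht z hz with ⟨-, h⟩ | ⟨-, h⟩ <;>
      rcases Sym2.mem_iff.mp h with rfl | rfl <;> simp_all
  obtain ⟨z, hz⟩ := hiso t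
  have ht2 : 2 ≤ G.degree t := by
    have hz' := hsub ((G.mem_neighborFinset t z).mpr hz)
    rcases Finset.mem_insert.mp hz' with rfl | hz'
    · exact hNa t hz.symm
    rw [Finset.mem_singleton.mp hz'] at hz
    exact hNb t hz.symm
  exact Finset.eq_of_subset_of_card_le hsub (Finset.card_le_two.trans ht2)

/-- If some `w` has neighbourhood exactly `{x, y}`, use the edge `xw` instead of `xy`: then `y` is
the only vertex besides `x` and `w` whose neighbours all lie in `{x, w}`. -/
lemma exists_isClique_closedVerts (hiso : ∀ v : V, ∃ u, G.Adj v u) {x y : V} (hxy : G.Adj x y)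
    (hx : 2 ≤ G.degree x) (hy : 2 ≤ G.degree y)
    (hNx : ∀ z, G.Adj x z → 2 ≤ G.degree z) (hNy : ∀ z, G.Adj y z → 2 ≤ G.degree z) :
    ∃ a b, G.Adj a b ∧ 2 ≤ G.degree a ∧ 2 ≤ G.degree b ∧
      G.IsClique (closedVerts G (G.incidenceSet a ∪ G.incidenceSet b)) := by
  classical
  by_cases htwin : ∃ w, G.neighborFinset w = {x, y}
  · obtain ⟨w, hw⟩ := htwin
    have hNw : ∀ z, G.Adj w z ↔ z = x ∨ z = y := fun z => by
      rw [← G.mem_neighborFinset, hw]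
      simp
    have hwx : G.Adj w x := (hNw x).mpr (Or.inl rfl)
    have hwy : G.Adj w y := (hNw y).mpr (Or.inr rfl)
    have hw2 : 2 ≤ G.degree w := by
      rw [← SimpleGraph.card_neighborFinset_eq_degree, hw, Finset.card_pair hxy.ne]
    have hNw2 : ∀ z, G.Adj w z → 2 ≤ G.degree z := fun z hz => by
      rcases (hNw z).mp hz with rfl | rfl <;> assumption
    have htriangle : G.IsClique {x, w, y} := by
      simp [hxy, hwx.symm, hwy]
    refine ⟨x, w, hwx.symm, hx, hw2, htriangle.subset fun t ht => ?_⟩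
    by_cases htx : t = x
    · simp [htx]
    by_cases htw : t = w
    · simp [htw]
    have htw' : G.Adj t w := by
      rw [← G.mem_neighborFinset, neighborFinset_eq_of_mem_closedVerts hiso hNx hNw2 ht htx htw]
      simp
    rcases (hNw t).mp htw'.symm with rfl | rfl
    · exact absurd rfl htx
    · simp
  · refine ⟨x, y, hxy, hx, hy, (SimpleGraph.isClique_pair.mpr fun _ => hxy).subset fun t ht => ?_⟩
    by_contra htxy
    simp only [Set.mem_insert_iff, Set.mem_singleton_iff, not_or] at htxy
    exact htwin ⟨t, neighborFinset_eq_of_mem_closedVerts hiso hNx hNy ht htxy.1 htxy.2⟩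

end necessity

theorem stmt4 {V : Type*} [Fintype V] (G : SimpleGraph V) [DecidableRel G.Adj]
    (hiso : ∀ v : V, ∃ u, G.Adj v u) :
    (∀ S T : Set (Sym2 V), S ⊆ G.edgeSet → T ⊆ G.edgeSet →
        gamma G S + gamma G T ≤ gamma G (S ∩ T) + gamma G (S ∪ T)) ↔
      (∀ e ∈ G.edgeSet, (¬ ∃ v ∈ e, G.degree v = 1) →
        ∃ f ∈ G.edgeSet, (∃ v ∈ f, G.degree v = 1) ∧ ∃ u : V, u ∈ e ∧ u ∈ f) := by
  refine ⟨fun hconv e he hnp => ?_, fun hcond S T _ _ => ?_⟩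
  · induction e using Sym2.inductionOn with | hf x y => ?_
    by_contra hno
    have hN : ∀ u ∈ s(x, y), ∀ z, G.Adj u z → 2 ≤ G.degree z := fun u hu z hz =>
      two_le_degree_of_adj hz.symm fun hz₁ =>
        hno ⟨s(u, z), hz, ⟨z, Sym2.mem_mk_right u z, hz₁⟩, u, hu, Sym2.mem_mk_left u z⟩
    have hx := two_le_degree_of_adj he fun h => hnp ⟨x, Sym2.mem_mk_left x y, h⟩
    have hy := two_le_degree_of_adj he.symm fun h => hnp ⟨y, Sym2.mem_mk_right x y, h⟩
    obtain ⟨a, b, hab, ha, hb, hclique⟩ := exists_isClique_closedVerts hiso he hx hy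
      (hN x (Sym2.mem_mk_left x y)) (hN y (Sym2.mem_mk_right x y))
    exact (gamma_inter_add_gamma_union_lt hiso hab ha hb hclique).not_ge
      (hconv _ _ (G.incidenceSet_subset a) (G.incidenceSet_subset b))
  · let : LinearOrder V := LinearOrder.lift' _ (Fintype.equivFin V).injective
    exact (isPendantCover_of_linearOrder hcond).gamma_add_gamma_le S T
end

section
/- Let G = (V,E) be a finite simple graph without isolated vertices and γ(F) = α(G[V⟨F⟩]) the independent set game characteristic function. Then γ is additive (i.e., γ(S) + γ(T) = γ(S ∩ T) + γ(S ∪ T) for all S, T ⊆ E) if and only if every non-pendant vertex of G is adjacent to a pendant vertex. -/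
/-!
An edge is pendant if one of its ends has degree one. Choosing a degree-one end of each pendant
edge of `F` gives an independent subset of `V⟨F⟩`, so `γ(F)` is at least the number of pendant
edges in `F`. If every non-pendant vertex has a pendant neighbour, every vertex lies on a pendant
edge, and an independent subset of `V⟨F⟩` injects into the pendant edges of `F`; then `γ(F)` counts
the pendant edges of `F`, which is additive.

Conversely, an additive `γ` with `γ(∅) = 0` is bounded on `E` by the additive pendant-edge count,
since this holds on single edges. But if a non-pendant vertex `v` had no pendant neighbour, `v`
together with the chosen degree-one ends of all pendant edges would be an independent set of
`G = G[V⟨E⟩]` exceeding that count.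
-/

open SimpleGraph

def IsModularOn {α : Type*} (f : Set α → ℕ) (E : Set α) : Prop :=
  ∀ S T, S ⊆ E → T ⊆ E → f S + f T = f (S ∩ T) + f (S ∪ T)

theorem isModularOn_ncard_inter {α : Type*} [Finite α] (P E : Set α) :
    IsModularOn (fun F => (F ∩ P).ncard) E := by
  intro S T _ _
  dsimp only
  rw [Set.inter_inter_distrib_right, Set.union_inter_distrib_right]
  exact (Set.ncard_inter_add_ncard_union _ _).symm

theorem IsModularOn.le_of_singleton_le {α : Type*} [Finite α] {f g : Set α → ℕ} {E : Set α}
    (hf : IsModularOn f E) (hg : IsModularOn g E) (h₀ : f ∅ = g ∅)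
    (h₁ : ∀ e ∈ E, f {e} ≤ g {e}) {F : Set α} (hF : F ⊆ E) : f F ≤ g F := by
  induction F, Set.toFinite F using Set.Finite.induction_on with
  | empty => exact h₀.le
  | @insert e F he _ ih =>
    have heE : e ∈ E := hF (Set.mem_insert e F)
    have hFE : F ⊆ E := (Set.subset_insert e F).trans hF
    have hdisj : {e} ∩ F = ∅ := Set.singleton_inter_eq_empty.mpr he
    have hf' := hf {e} F (Set.singleton_subset_iff.mpr heE) hFE
    have hg' := hg {e} F (Set.singleton_subset_iff.mpr heE) hFE
    rw [hdisj, Set.singleton_union] at hf' hg'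
    have := h₁ e heE
    have := ih hFE
    omega

section Gamma

variable {V : Type*} {G : SimpleGraph V}

theorem closedVerts_edgeSet : closedVerts G G.edgeSet = Set.univ :=
  Set.eq_univ_of_forall fun _ _ he _ => he

theorem closedVerts_empty (hiso : ∀ v : V, ∃ u, G.Adj v u) :
    closedVerts G (∅ : Set (Sym2 V)) = ∅ :=
  Set.eq_empty_of_forall_notMem fun v hv =>
    let ⟨u, hu⟩ := hiso v
    hv s(v, u) hu (Sym2.mem_mk_left v u)

theorem IsIndepOn.card_le_one_of_forall_mem_edge {A : Set V} {s : Finset V} (hs : IsIndepOn G A s)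
    {e : Sym2 V} (he : e ∈ G.edgeSet) (hse : ∀ x ∈ s, x ∈ e) : s.card ≤ 1 := by
  refine Finset.card_le_one.mpr fun a ha b hb => ?_
  by_contra hab
  rw [(Sym2.mem_and_mem_iff hab).mp ⟨hse a ha, hse b hb⟩, mem_edgeSet] at he
  exact hs.2 a ha b hb he

variable [Fintype V]

theorem gamma_le_of_forall_card_le {F : Set (Sym2 V)} {m : ℕ}
    (h : ∀ s : Finset V, IsIndepOn G (closedVerts G F) s → s.card ≤ m) : gamma G F ≤ m :=
  csSup_le ⟨0, ∅, ⟨by simp, by simp⟩, rfl⟩ (by rintro n ⟨s, hs, rfl⟩; exact h s hs)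

theorem card_le_gamma {F : Set (Sym2 V)} {s : Finset V} (h : IsIndepOn G (closedVerts G F) s) :
    s.card ≤ gamma G F :=
  le_csSup ⟨Fintype.card V, by rintro n ⟨s, _, rfl⟩; exact s.card_le_univ⟩ ⟨s, h, rfl⟩

theorem gamma_empty (hiso : ∀ v : V, ∃ u, G.Adj v u) : gamma G (∅ : Set (Sym2 V)) = 0 :=
  Nat.le_zero.mp <| gamma_le_of_forall_card_le fun s hs => by
    rw [Nat.le_zero, Finset.card_eq_zero, ← Finset.coe_eq_empty, ← Set.subset_empty_iff,
      ← closedVerts_empty hiso]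
    exact hs.1

variable [DecidableRel G.Adj]

theorem eq_of_degree_eq_one {v : V} (hv : G.degree v = 1) {e e' : Sym2 V}
    (he : e ∈ G.edgeSet) (hve : v ∈ e) (he' : e' ∈ G.edgeSet) (hve' : v ∈ e') : e = e' := by
  classical
  refine Finset.card_le_one.mp ?_ e ((mem_incidenceFinset ..).mpr ⟨he, hve⟩)
    e' ((mem_incidenceFinset ..).mpr ⟨he', hve'⟩)
  rw [card_incidenceFinset_eq_degree, hv]

theorem mem_closedVerts_of_degree_eq_one {F : Set (Sym2 V)} {e : Sym2 V} (heF : e ∈ F)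
    (he : e ∈ G.edgeSet) {v : V} (hve : v ∈ e) (hv : G.degree v = 1) : v ∈ closedVerts G F :=
  fun _ he' hve' => eq_of_degree_eq_one hv he' hve' he hve ▸ heF

theorem mem_and_degree_eq_one_of_mem_closedVerts_singleton (hiso : ∀ v : V, ∃ u, G.Adj v u)
    {e : Sym2 V} (he : e ∈ G.edgeSet) {v : V} (hv : v ∈ closedVerts G {e}) :
    v ∈ e ∧ G.degree v = 1 := by
  classical
  obtain ⟨u, hu⟩ := hiso v
  have hve : v ∈ e := hv s(v, u) hu (Sym2.mem_mk_left v u) ▸ Sym2.mem_mk_left v u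
  refine ⟨hve, ?_⟩
  rw [← card_incidenceFinset_eq_degree, Finset.card_eq_one]
  refine ⟨e, Finset.eq_singleton_iff_unique_mem.mpr ⟨?_, fun e' he' => ?_⟩⟩
  · exact (mem_incidenceFinset ..).mpr ⟨he, hve⟩
  · rw [mem_incidenceFinset] at he'
    exact hv e' he'.1 he'.2

variable (G) in
def pendantEdges : Set (Sym2 V) :=
  {e | e ∈ G.edgeSet ∧ ∃ w ∈ e, G.degree w = 1}

theorem exists_isIndepOn_card_eq_ncard_pendantEdges (F : Set (Sym2 V)) :
    ∃ s : Finset V, IsIndepOn G (closedVerts G F) s ∧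
      s.card = (F ∩ pendantEdges G).ncard ∧ ∀ x ∈ s, G.degree x = 1 := by
  classical
  have hend (e : Sym2 V) : ∃ w, e ∈ pendantEdges G → w ∈ e ∧ G.degree w = 1 := by
    by_cases he : e ∈ pendantEdges G
    · obtain ⟨w, hw⟩ := he.2
      exact ⟨w, fun _ => hw⟩
    · exact ⟨(Quot.out e).1, fun h => absurd h he⟩
  choose p hp using hend
  have hinj : Set.InjOn p (F ∩ pendantEdges G) := fun e he e' he' hpe =>
    eq_of_degree_eq_one (hp e he.2).2 he.2.1 (hp e he.2).1 he'.2.1 (hpe ▸ (hp e' he'.2).1)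
  refine ⟨(Set.toFinite (F ∩ pendantEdges G)).toFinset.image p, ⟨?_, ?_⟩, ?_, ?_⟩
  · rintro _ hx
    obtain ⟨e, he, rfl⟩ := by simpa using hx
    exact mem_closedVerts_of_degree_eq_one he.1 he.2.1 (hp e he.2).1 (hp e he.2).2
  · simp only [Finset.mem_image, Set.Finite.mem_toFinset]
    rintro _ ⟨e, he, rfl⟩ _ ⟨e', he', rfl⟩ hadj
    have h₁ := eq_of_degree_eq_one (hp e he.2).2 hadj (Sym2.mem_mk_left _ _) he.2.1 (hp e he.2).1
    have h₂ :=
      eq_of_degree_eq_one (hp e' he'.2).2 hadj (Sym2.mem_mk_right _ _) he'.2.1 (hp e' he'.2).1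
    exact G.loopless.irrefl _ (h₁.symm.trans h₂ ▸ hadj)
  · rw [Finset.card_image_of_injOn (by simpa using hinj), ← Set.ncard_eq_toFinset_card]
  · simp only [Finset.mem_image, Set.Finite.mem_toFinset]
    rintro _ ⟨e, he, rfl⟩
    exact (hp e he.2).2

theorem exists_adj_mem_pendantEdges
    (H : ∀ v : V, G.degree v ≠ 1 → ∃ w : V, G.Adj v w ∧ G.degree w = 1) (v : V) :
    ∃ w, G.Adj v w ∧ s(v, w) ∈ pendantEdges G := by
  by_cases hv : G.degree v = 1
  · obtain ⟨w, hw⟩ := G.degree_pos_iff_exists_adj v |>.mp (by omega)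
    exact ⟨w, hw, hw, v, Sym2.mem_mk_left v w, hv⟩
  · obtain ⟨w, hw, hwd⟩ := H v hv
    exact ⟨w, hw, hw, w, Sym2.mem_mk_right v w, hwd⟩

theorem gamma_le_ncard_pendantEdges
    (H : ∀ v : V, G.degree v ≠ 1 → ∃ w : V, G.Adj v w ∧ G.degree w = 1) (F : Set (Sym2 V)) :
    gamma G F ≤ (F ∩ pendantEdges G).ncard := by
  choose w hw using exists_adj_mem_pendantEdges H
  refine gamma_le_of_forall_card_le fun s hs => ?_
  rw [← Set.ncard_coe_finset]
  refine Set.ncard_le_ncard_of_injOn (fun v => s(v, w v)) (fun v hv => ⟨?_, (hw v).2⟩) ?_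
  · exact hs.1 hv _ (hw v).1 (Sym2.mem_mk_left _ _)
  · intro u hu v hv (huv : s(u, w u) = s(v, w v))
    by_contra hne
    have hvu : v ∈ s(u, w u) := huv ▸ Sym2.mem_mk_left v (w v)
    have hwu : w u = v :=
      Sym2.congr_right.mp ((Sym2.mem_and_mem_iff hne).mp ⟨Sym2.mem_mk_left _ _, hvu⟩)
    exact hs.2 u hu v hv (hwu ▸ (hw u).1)

theorem gamma_eq_ncard_pendantEdges
    (H : ∀ v : V, G.degree v ≠ 1 → ∃ w : V, G.Adj v w ∧ G.degree w = 1) (F : Set (Sym2 V)) :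
    gamma G F = (F ∩ pendantEdges G).ncard := by
  refine (gamma_le_ncard_pendantEdges H F).antisymm ?_
  obtain ⟨s, hs, hcard, -⟩ := exists_isIndepOn_card_eq_ncard_pendantEdges (G := G) F
  exact hcard ▸ card_le_gamma hs

theorem gamma_singleton_le (hiso : ∀ v : V, ∃ u, G.Adj v u) {e : Sym2 V} (he : e ∈ G.edgeSet) :
    gamma G {e} ≤ ({e} ∩ pendantEdges G).ncard := by
  refine gamma_le_of_forall_card_le fun s hs => ?_
  have hsub x (hx : x ∈ s) := mem_and_degree_eq_one_of_mem_closedVerts_singleton hiso he (hs.1 hx)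
  obtain rfl | ⟨x, hx⟩ := s.eq_empty_or_nonempty
  · simp
  · have hP : e ∈ pendantEdges G := ⟨he, x, hsub x hx⟩
    rw [Set.singleton_inter_of_mem hP, Set.ncard_singleton]
    exact hs.card_le_one_of_forall_mem_edge he fun y hy => (hsub y hy).1

theorem gamma_le_ncard_pendantEdges_of_isModularOn (hiso : ∀ v : V, ∃ u, G.Adj v u)
    (hmod : IsModularOn (gamma G) G.edgeSet) {F : Set (Sym2 V)} (hF : F ⊆ G.edgeSet) :
    gamma G F ≤ (F ∩ pendantEdges G).ncard :=
  hmod.le_of_singleton_le (isModularOn_ncard_inter _ _)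
    (by rw [gamma_empty hiso, Set.empty_inter, Set.ncard_empty])
    (fun _ he => gamma_singleton_le hiso he) hF

theorem exists_adj_degree_eq_one_of_isModularOn (hiso : ∀ v : V, ∃ u, G.Adj v u)
    (hmod : IsModularOn (gamma G) G.edgeSet) {v : V} (hv : G.degree v ≠ 1) :
    ∃ w, G.Adj v w ∧ G.degree w = 1 := by
  classical
  by_contra! hno
  obtain ⟨s, hs, hcard, hpend⟩ := exists_isIndepOn_card_eq_ncard_pendantEdges (G := G) G.edgeSet
  have hvs : v ∉ s := fun h => hv (hpend v h)
  have hindep : IsIndepOn G (closedVerts G G.edgeSet) (insert v s) := by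
    refine ⟨by simp [closedVerts_edgeSet], ?_⟩
    simp only [Finset.mem_insert]
    rintro a (rfl | ha) b (rfl | hb) hab
    · exact G.loopless.irrefl _ hab
    · exact hno b hab (hpend b hb)
    · exact hno a hab.symm (hpend a ha)
    · exact hs.2 a ha b hb hab
  have hlow := card_le_gamma hindep
  have hup := gamma_le_ncard_pendantEdges_of_isModularOn hiso hmod subset_rfl
  rw [Finset.card_insert_of_notMem hvs] at hlow
  omega

end Gamma

theorem stmt7 {V : Type*} [Fintype V] (G : SimpleGraph V) [DecidableRel G.Adj]
    (hiso : ∀ v : V, ∃ u, G.Adj v u) :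
    (∀ S T : Set (Sym2 V), S ⊆ G.edgeSet → T ⊆ G.edgeSet →
        gamma G S + gamma G T = gamma G (S ∩ T) + gamma G (S ∪ T)) ↔
      (∀ v : V, G.degree v ≠ 1 → ∃ w : V, G.Adj v w ∧ G.degree w = 1) := by
  refine ⟨fun hmod v hv => exists_adj_degree_eq_one_of_isModularOn hiso hmod hv,
    fun H S T hS hT => ?_⟩
  simp only [gamma_eq_ncard_pendantEdges H]
  exact isModularOn_ncard_inter (pendantEdges G) G.edgeSet S T hS hT
end

section
/- Let G = (V,E) be a finite simple graph without isolated vertices, and γ̂(F) = α(G[F]) the relaxed independent set game characteristic function. Then γ̂ is supermodular if and only if γ̂ is additive (γ̂(S) + γ̂(T) = γ̂(S ∩ T) + γ̂(S ∪ T) for all S, T ⊆ E). -/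
/-- The vertex set of the edge-induced subgraph `G[F]`: endpoints of edges in `F`. -/
def edgeVerts {V : Type*} (F : Set (Sym2 V)) : Set V := {v | ∃ e ∈ F, v ∈ e}

/-- `gammaHat F = α(G[F])`: the maximum size of a set of endpoints of edges of `F`
no two of which are joined by an edge of `F`. -/
noncomputable def gammaHat {V : Type*} [Fintype V] (F : Set (Sym2 V)) : ℕ :=
  sSup {n | ∃ s : Finset V, ↑s ⊆ edgeVerts F ∧
    (∀ u ∈ s, ∀ v ∈ s, s(u, v) ∉ F) ∧ s.card = n}

/-- `G` contains a subgraph isomorphic to the triangle `K₃`. -/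
def HasK3 {V : Type*} (G : SimpleGraph V) : Prop :=
  ∃ a b c : V, a ≠ b ∧ a ≠ c ∧ b ≠ c ∧ G.Adj a b ∧ G.Adj b c ∧ G.Adj a c

/-- `G` contains a subgraph isomorphic to the path `P₄` on four vertices. -/
def HasP4 {V : Type*} (G : SimpleGraph V) : Prop :=
  ∃ a b c d : V, a ≠ b ∧ a ≠ c ∧ a ≠ d ∧ b ≠ c ∧ b ≠ d ∧ c ≠ d ∧
    G.Adj a b ∧ G.Adj b c ∧ G.Adj c d

section aux
variable {V : Type*} [Fintype V]

lemma gammaHat_bddAbove (F : Set (Sym2 V)) :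
    BddAbove {n | ∃ s : Finset V, ↑s ⊆ edgeVerts F ∧
      (∀ u ∈ s, ∀ v ∈ s, s(u, v) ∉ F) ∧ s.card = n} := by
  refine ⟨Fintype.card V, ?_⟩
  rintro n ⟨s, -, -, rfl⟩
  exact s.card_le_univ.trans_eq (by simp)

lemma le_gammaHat (F : Set (Sym2 V)) (s : Finset V) (h1 : ↑s ⊆ edgeVerts F)
    (h2 : ∀ u ∈ s, ∀ v ∈ s, s(u, v) ∉ F) : s.card ≤ gammaHat F :=
  le_csSup (gammaHat_bddAbove F) ⟨s, h1, h2, rfl⟩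

lemma gammaHat_le (F : Set (Sym2 V)) (n : ℕ)
    (H : ∀ s : Finset V, ↑s ⊆ edgeVerts F →
      (∀ u ∈ s, ∀ v ∈ s, s(u, v) ∉ F) → s.card ≤ n) : gammaHat F ≤ n := by
  refine csSup_le ⟨0, ∅, by simp⟩ ?_
  rintro m ⟨s, h1, h2, rfl⟩
  exact H s h1 h2

omit [Fintype V] in
lemma indep_tri_card_le_one (F : Set (Sym2 V)) (s : Finset V) (a b c : V)
    (hsub : ∀ x ∈ s, x = a ∨ x = b ∨ x = c)
    (h1 : s(a, b) ∈ F) (h2 : s(b, c) ∈ F) (h3 : s(a, c) ∈ F)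
    (hind : ∀ u ∈ s, ∀ v ∈ s, s(u, v) ∉ F) : s.card ≤ 1 := by
  by_contra h
  obtain ⟨u, hu, v, hv, huv⟩ := Finset.one_lt_card.mp (lt_of_not_ge h)
  have hne := hind u hu v hv
  rcases hsub u hu with h' | h' | h' <;> rcases hsub v hv with h'' | h'' | h'' <;>
    subst h' <;> subst h'' <;> simp_all [Sym2.eq_swap]

omit [Fintype V] in
lemma indep_pair_card_le_one (F : Set (Sym2 V)) (s : Finset V) (a b : V)
    (hsub : ∀ x ∈ s, x = a ∨ x = b) (hab : s(a, b) ∈ F)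
    (hind : ∀ u ∈ s, ∀ v ∈ s, s(u, v) ∉ F) : s.card ≤ 1 := by
  by_contra h
  obtain ⟨u, hu, v, hv, huv⟩ := Finset.one_lt_card.mp (lt_of_not_ge h)
  have hne := hind u hu v hv
  rcases hsub u hu with h1 | h1 <;> rcases hsub v hv with h2 | h2 <;>
    subst h1 <;> subst h2 <;> simp_all [Sym2.eq_swap]

end aux

section main
variable {V : Type*} [Fintype V] {G : SimpleGraph V}

lemma no_config
    (hsup : ∀ S T : Set (Sym2 V), S ⊆ G.edgeSet → T ⊆ G.edgeSet →
        gammaHat S + gammaHat T ≤ gammaHat (S ∩ T) + gammaHat (S ∪ T))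
    {a b c d : V} (hab : G.Adj a b) (hac : G.Adj a c) (hcb : c ≠ b)
    (hbd : G.Adj b d) (hda : d ≠ a) : False := by
  classical
  have hane : a ≠ b := hab.ne
  have hca : c ≠ a := hac.ne'
  have hdb : d ≠ b := hbd.ne'
  have hSE : ({s(c, a), s(a, b)} : Set (Sym2 V)) ⊆ G.edgeSet := by
    rintro e (rfl | rfl)
    · exact hac.symm
    · exact hab
  have hTE : ({s(a, b), s(b, d)} : Set (Sym2 V)) ⊆ G.edgeSet := by
    rintro e (rfl | rfl)
    · exact hab
    · exact hbd
  have hST : ({s(c, a), s(a, b)} : Set (Sym2 V)) ∩ {s(a, b), s(b, d)} = {s(a, b)} := by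
    ext e
    simp only [Set.mem_inter_iff, Set.mem_insert_iff, Set.mem_singleton_iff]
    constructor
    · rintro ⟨rfl | rfl, h2 | h2⟩ <;> first | rfl |
        (rw [Sym2.eq_iff] at h2; tauto)
    · rintro rfl; tauto
  have hSlb : 2 ≤ gammaHat ({s(c, a), s(a, b)} : Set (Sym2 V)) := by
    have h1 : ↑({c, b} : Finset V) ⊆ edgeVerts ({s(c, a), s(a, b)} : Set (Sym2 V)) := by
      intro x hx
      simp only [Finset.coe_insert, Finset.coe_singleton, Set.mem_insert_iff,
        Set.mem_singleton_iff] at hx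
      refine hx.elim (fun h => ⟨s(c, a), Or.inl rfl, ?_⟩) (fun h => ⟨s(a, b), Or.inr rfl, ?_⟩) <;>
        subst h <;> simp
    have h2 : ∀ u ∈ ({c, b} : Finset V), ∀ v ∈ ({c, b} : Finset V),
        s(u, v) ∉ ({s(c, a), s(a, b)} : Set (Sym2 V)) := by
      intro u hu v hv h
      simp only [Finset.mem_insert, Finset.mem_singleton] at hu hv
      simp only [Set.mem_insert_iff, Set.mem_singleton_iff, Sym2.eq_iff] at h
      rcases hu with rfl | rfl <;> rcases hv with rfl | rfl <;> tauto
    have := le_gammaHat _ _ h1 h2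
    rwa [Finset.card_insert_of_notMem (by simp [hcb]), Finset.card_singleton] at this
  have hTlb : 2 ≤ gammaHat ({s(a, b), s(b, d)} : Set (Sym2 V)) := by
    have h1 : ↑({a, d} : Finset V) ⊆ edgeVerts ({s(a, b), s(b, d)} : Set (Sym2 V)) := by
      intro x hx
      simp only [Finset.coe_insert, Finset.coe_singleton, Set.mem_insert_iff,
        Set.mem_singleton_iff] at hx
      refine hx.elim (fun h => ⟨s(a, b), Or.inl rfl, ?_⟩) (fun h => ⟨s(b, d), Or.inr rfl, ?_⟩) <;>
        subst h <;> simp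
    have h2 : ∀ u ∈ ({a, d} : Finset V), ∀ v ∈ ({a, d} : Finset V),
        s(u, v) ∉ ({s(a, b), s(b, d)} : Set (Sym2 V)) := by
      intro u hu v hv h
      simp only [Finset.mem_insert, Finset.mem_singleton] at hu hv
      simp only [Set.mem_insert_iff, Set.mem_singleton_iff, Sym2.eq_iff] at h
      rcases hu with rfl | rfl <;> rcases hv with rfl | rfl <;> tauto
    have := le_gammaHat _ _ h1 h2
    rwa [Finset.card_insert_of_notMem (by simp [hda.symm]), Finset.card_singleton] at this
  have hSTub : gammaHat (({s(c, a), s(a, b)} : Set (Sym2 V)) ∩ {s(a, b), s(b, d)}) ≤ 1 := by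
    rw [hST]
    refine gammaHat_le _ _ (fun s h1 h2 => ?_)
    refine indep_pair_card_le_one {s(a, b)} s a b (fun x hx => ?_) rfl h2
    obtain ⟨e, he, hxe⟩ := h1 hx
    rw [Set.mem_singleton_iff] at he
    subst he
    rcases Sym2.mem_iff.mp hxe with rfl | rfl <;> tauto
  have hUub : gammaHat (({s(c, a), s(a, b)} : Set (Sym2 V)) ∪ {s(a, b), s(b, d)}) ≤ 2 := by
    refine gammaHat_le _ _ (fun s h1 h2 => ?_)
    by_cases hcd : c = d
    · -- triangle a b c
      subst hcd
      refine le_trans (indep_tri_card_le_one _ s a b c (fun x hx => ?_)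
        (by simp) (by simp) (by simp [Sym2.eq_swap]) h2) (by norm_num)
      obtain ⟨e, he, hxe⟩ := h1 hx
      simp only [Set.mem_union, Set.mem_insert_iff, Set.mem_singleton_iff] at he
      rcases he with (rfl | rfl) | (rfl | rfl) <;> rcases Sym2.mem_iff.mp hxe with rfl | rfl <;>
        tauto
    · -- P4 : c a b d
      have hsub : s ⊆ ({c, a} : Finset V) ∪ ({b, d} : Finset V) := by
        intro x hx
        obtain ⟨e, he, hxe⟩ := h1 hx
        simp only [Set.mem_union, Set.mem_insert_iff, Set.mem_singleton_iff] at he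
        simp only [Finset.mem_union, Finset.mem_insert, Finset.mem_singleton]
        rcases he with (rfl | rfl) | (rfl | rfl) <;> rcases Sym2.mem_iff.mp hxe with rfl | rfl <;>
          tauto
      have hkey : s.card ≤ (s ∩ ({c, a} : Finset V)).card + (s ∩ ({b, d} : Finset V)).card := by
        calc s.card ≤ ((s ∩ ({c, a} : Finset V)) ∪ (s ∩ ({b, d} : Finset V))).card := by
              refine Finset.card_le_card (fun x hx => ?_)
              have := hsub hx
              simp only [Finset.mem_union] at this ⊢
              rcases this with h | h
              · exact Or.inl (Finset.mem_inter.mpr ⟨hx, h⟩)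
              · exact Or.inr (Finset.mem_inter.mpr ⟨hx, h⟩)
          _ ≤ _ := Finset.card_union_le _ _
      have hca' : (s ∩ ({c, a} : Finset V)).card ≤ 1 := by
        refine indep_pair_card_le_one _ _ c a (fun x hx => ?_) (Or.inl (Or.inl rfl))
          (fun u hu v hv => h2 u (Finset.mem_of_mem_inter_left hu) v
            (Finset.mem_of_mem_inter_left hv))
        have := Finset.mem_of_mem_inter_right hx
        simpa using this
      have hbd' : (s ∩ ({b, d} : Finset V)).card ≤ 1 := by
        refine indep_pair_card_le_one _ _ b d (fun x hx => ?_) (Or.inr (Or.inr rfl))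
          (fun u hu v hv => h2 u (Finset.mem_of_mem_inter_left hu) v
            (Finset.mem_of_mem_inter_left hv))
        have := Finset.mem_of_mem_inter_right hx
        simpa using this
      omega
  have := hsup _ _ hSE hTE
  omega

lemma exists_pendant
    (hsup : ∀ S T : Set (Sym2 V), S ⊆ G.edgeSet → T ⊆ G.edgeSet →
        gammaHat S + gammaHat T ≤ gammaHat (S ∩ T) + gammaHat (S ∪ T))
    {e : Sym2 V} (he : e ∈ G.edgeSet) :
    ∃ v ∈ e, ∀ u, G.Adj v u → s(v, u) = e := by
  induction e using Sym2.ind with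
  | _ a b =>
    have hab : G.Adj a b := he
    by_cases h : ∃ c, c ≠ b ∧ G.Adj a c
    · obtain ⟨c, hcb, hac⟩ := h
      refine ⟨b, by simp, fun u hu => ?_⟩
      by_cases hua : u = a
      · subst hua; rw [Sym2.eq_swap]
      · exact absurd (no_config hsup hab hac hcb hu hua) (by simp)
    · push_neg at h
      refine ⟨a, by simp, fun u hu => ?_⟩
      by_cases hub : u = b
      · subst hub; rfl
      · exact absurd (h u hub) (by simp [hu])

lemma gammaHat_eq_ncard
    (hsup : ∀ S T : Set (Sym2 V), S ⊆ G.edgeSet → T ⊆ G.edgeSet →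
        gammaHat S + gammaHat T ≤ gammaHat (S ∩ T) + gammaHat (S ∪ T))
    (F : Set (Sym2 V)) (hF : F ⊆ G.edgeSet) : gammaHat F = F.ncard := by
  classical
  refine le_antisymm ?_ ?_
  · refine gammaHat_le _ _ (fun s h1 h2 => ?_)
    have hf : ∀ v : V, ∃ e, v ∈ s → e ∈ F ∧ v ∈ e := by
      intro v
      by_cases hv : v ∈ s
      · obtain ⟨e, he, hve⟩ := h1 hv
        exact ⟨e, fun _ => ⟨he, hve⟩⟩
      · exact ⟨s(v, v), fun h => absurd h hv⟩
    choose f hfspec using hf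
    calc s.card ≤ (F.toFinite.toFinset).card := by
          refine Finset.card_le_card_of_injOn f
            (fun v hv => (Set.Finite.mem_toFinset _).mpr (hfspec v hv).1) ?_
          intro u hu v hv hfe
          by_contra hne
          have h1u := hfspec u hu
          have h1v := hfspec v hv
          have : f u = s(u, v) := (Sym2.mem_and_mem_iff hne).mp ⟨h1u.2, hfe ▸ h1v.2⟩
          exact h2 u hu v hv (this ▸ h1u.1)
      _ = F.ncard := (Set.ncard_eq_toFinset_card F F.toFinite).symm
  · have hpend : ∀ e : {e // e ∈ F.toFinite.toFinset},
        ∃ v, v ∈ e.1 ∧ ∀ u, G.Adj v u → s(v, u) = e.1 := by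
      intro e
      have he : e.1 ∈ G.edgeSet := hF ((Set.Finite.mem_toFinset _).mp e.2)
      obtain ⟨v, hv1, hv2⟩ := exists_pendant hsup he
      exact ⟨v, hv1, hv2⟩
    choose g hg1 hg2 using hpend
    have hginj : Function.Injective g := by
      intro e1 e2 hg
      have he1 : e1.1 ∈ G.edgeSet := hF ((Set.Finite.mem_toFinset _).mp e1.2)
      obtain ⟨u, hu⟩ := Sym2.mem_iff_exists.mp (hg1 e1)
      rw [hu, SimpleGraph.mem_edgeSet] at he1
      have ha := hg2 e1 u he1
      have hb := hg2 e2 u (hg ▸ he1)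
      exact Subtype.ext (ha ▸ hb ▸ (hg ▸ rfl))
    have hcard : (F.toFinite.toFinset.attach.image g).card = F.ncard := by
      rw [Finset.card_image_of_injective _ hginj, Finset.card_attach,
        Set.ncard_eq_toFinset_card F F.toFinite]
    have h1 : ↑(F.toFinite.toFinset.attach.image g) ⊆ edgeVerts F := by
      intro x hx
      simp only [Finset.coe_image, Set.mem_image, Finset.mem_coe, Finset.mem_attach,
        true_and] at hx
      obtain ⟨e, -, rfl⟩ := hx
      exact ⟨e.1, (Set.Finite.mem_toFinset _).mp e.2, hg1 e⟩
    have h2 : ∀ u ∈ F.toFinite.toFinset.attach.image g,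
        ∀ v ∈ F.toFinite.toFinset.attach.image g, s(u, v) ∉ F := by
      intro u hu v hv huv
      simp only [Finset.mem_image, Finset.mem_attach, true_and] at hu hv
      obtain ⟨e1, rfl⟩ := hu
      obtain ⟨e2, rfl⟩ := hv
      have hadj : G.Adj (g e1) (g e2) := hF huv
      have ha := hg2 e1 (g e2) hadj
      have hb := hg2 e2 (g e1) hadj.symm
      have h12 : e1 = e2 := Subtype.ext (by rw [← ha, ← hb, Sym2.eq_swap])
      subst h12
      exact G.irrefl hadj
    have hle := le_gammaHat F _ h1 h2
    rwa [hcard] at hle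

end main

theorem stmt14 {V : Type*} [Fintype V] (G : SimpleGraph V)
    (hiso : ∀ v : V, ∃ u, G.Adj v u) :
    (∀ S T : Set (Sym2 V), S ⊆ G.edgeSet → T ⊆ G.edgeSet →
        gammaHat S + gammaHat T ≤ gammaHat (S ∩ T) + gammaHat (S ∪ T)) ↔
      (∀ S T : Set (Sym2 V), S ⊆ G.edgeSet → T ⊆ G.edgeSet →
        gammaHat S + gammaHat T = gammaHat (S ∩ T) + gammaHat (S ∪ T)) := by
  constructor
  · intro h S T hS hT
    rw [gammaHat_eq_ncard h S hS, gammaHat_eq_ncard h T hT,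
      gammaHat_eq_ncard h (S ∩ T) (Set.inter_subset_left.trans hS),
      gammaHat_eq_ncard h (S ∪ T) (Set.union_subset hS hT)]
    exact (Set.ncard_inter_add_ncard_union S T (Set.toFinite S) (Set.toFinite T)).symm
  · intro h S T hS hT
    exact (h S T hS hT).le
end

section
/- Let G = (V,E) be a finite simple graph without isolated vertices, let e = u₁u₂ be an edge of G, and F ⊆ E \ {e}. If I is a maximum independent set of G[V⟨F ∪ {e}⟩] with I ∩ {u₁, u₂} = ∅, then I is a maximum independent set of G[V⟨F⟩]; in particular γ(F ∪ {e}) = γ(F) in this case. -/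
lemma bdd_aux {V : Type*} [Fintype V] (G : SimpleGraph V) (F : Set (Sym2 V)) :
    BddAbove {n | ∃ s : Finset V, IsIndepOn G (closedVerts G F) s ∧ s.card = n} := by
  refine ⟨Fintype.card V, ?_⟩
  rintro n ⟨s, _, rfl⟩
  exact Finset.card_le_univ s

theorem stmt15 {V : Type*} [Fintype V] (G : SimpleGraph V)
    (hiso : ∀ v : V, ∃ u, G.Adj v u)
    (u₁ u₂ : V) (hadj : G.Adj u₁ u₂)
    (F : Set (Sym2 V)) (hF : F ⊆ G.edgeSet) (heF : s(u₁, u₂) ∉ F)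
    (I : Finset V)
    (hind : IsIndepOn G (closedVerts G (insert s(u₁, u₂) F)) I)
    (hmax : I.card = gamma G (insert s(u₁, u₂) F))
    (h1 : u₁ ∉ I) (h2 : u₂ ∉ I) :
    IsIndepOn G (closedVerts G F) I ∧ I.card = gamma G F ∧
      gamma G (insert s(u₁, u₂) F) = gamma G F := by
  have hsub : ↑I ⊆ closedVerts G F := by
    intro v hv e he hve
    have := hind.1 hv e he hve
    rcases this with h | h
    · subst h
      rcases Sym2.mem_iff.mp hve with rfl | rfl
      · exact absurd hv h1
      · exact absurd hv h2
    · exact h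
  have hindF : IsIndepOn G (closedVerts G F) I := ⟨hsub, hind.2⟩
  have hmono : closedVerts G F ⊆ closedVerts G (insert s(u₁, u₂) F) := by
    intro v hv e he hve
    exact Set.mem_insert_iff.mpr (Or.inr (hv e he hve))
  have le1 : I.card ≤ gamma G F := le_csSup (bdd_aux G F) ⟨I, hindF, rfl⟩
  have le2 : gamma G F ≤ gamma G (insert s(u₁, u₂) F) := by
    have hne : Set.Nonempty {n | ∃ s : Finset V, IsIndepOn G (closedVerts G F) s ∧ s.card = n} :=
      ⟨0, ∅, ⟨by simp, by simp⟩, by simp⟩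
    apply csSup_le_csSup (bdd_aux G _) hne
    rintro n ⟨s, hs, rfl⟩
    exact ⟨s, ⟨fun x hx => hmono (hs.1 hx), hs.2⟩, rfl⟩
  have heq : gamma G F = I.card := le_antisymm (hmax ▸ le2) le1
  exact ⟨hindF, heq.symm, hmax ▸ heq.symm⟩
end
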